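/- Let m ≥ 0 be an integer, let C ⊆ ℝ^{m+1} be a nonempty open cone (i.e. t·y ∈ C whenever y ∈ C and t > 0), let G : C → ℝ be twice continuously differentiable, and let γ, ξ ∈ ℝ^{m+1}. Suppose h : C → ℝ satisfies h(t·y) = h(y) for all t > 0 and y ∈ C, and that: (i) det(Hess G(y)) = exp(2⟨γ, ∇G(y)⟩ + h(y)) for all y ∈ C; (ii) det(Hess G(t·y)) = t^{−(m+1)} det(Hess G(y)) for all t > 0 and y ∈ C; and (iii) 2·Hess G(y)·y = ξ for all y ∈ C. Then ⟨γ, ξ⟩ = −(m+1). -/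

import Mathlib

/-!
Fix `y ∈ C` and restrict to the ray `t ↦ t • y`. Taking logarithms in (i) and using (ii) and the
homogeneity of `h`, the function `t ↦ ⟨γ, ∇G(t • y)⟩` equals `⟨γ, ∇G(y)⟩ - (m + 1)/2 · log t`
near `t = 1`. Differentiating at `t = 1` (the Euler operator) gives
`D²G(y)(y, γ) = -(m + 1)/2`, while by symmetry of `D²G(y)` and (iii) the left side is `⟨γ, ξ⟩ / 2`.
-/

open Filter Topology

theorem sum_smul_apply_single {ι R M F : Type*} [Fintype ι] [DecidableEq ι] [Semiring R]
    [AddCommMonoid M] [Module R M] [FunLike F (ι → R) M] [LinearMapClass F R (ι → R) M]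
    (L : F) (v : ι → R) : ∑ i, v i • L (Pi.single i 1) = L v := by
  conv_rhs => rw [pi_eq_sum_univ' v]
  simp [map_sum, map_smul]

theorem ContinuousLinearMap.apply_apply_eq_sum_single {ι : Type*} [Fintype ι] [DecidableEq ι]
    (B : (ι → ℝ) →L[ℝ] (ι → ℝ) →L[ℝ] ℝ) (v w : ι → ℝ) :
    B v w = ∑ i, v i * ∑ j, B (Pi.single i 1) (Pi.single j 1) * w j := by
  simp_rw [← sum_smul_apply_single B v, sum_apply, smul_apply, smul_eq_mul, mul_comm _ (w _)]
  congr! 2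
  simpa using (sum_smul_apply_single (B (Pi.single _ 1)) w).symm

section Calculus

variable {E F : Type*} [NormedAddCommGroup E] [NormedSpace ℝ E] [NormedAddCommGroup F]
  [NormedSpace ℝ F]

theorem fderiv_clm_apply_const {G : Type*} [NormedAddCommGroup G] [NormedSpace ℝ G]
    {c : E → F →L[ℝ] G} {x : E} (hc : DifferentiableAt ℝ c x) (w : F) (v : E) :
    fderiv ℝ (fun z => c z w) x v = fderiv ℝ c x v w := by
  simp [fderiv_clm_apply hc (differentiableAt_const w)]

theorem DifferentiableAt.hasDerivAt_comp_smul_one {g : E → F} {x : E}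
    (hg : DifferentiableAt ℝ g x) : HasDerivAt (fun t : ℝ => g (t • x)) (fderiv ℝ g x x) 1 := by
  have hline : HasDerivAt (fun t : ℝ => t • x) x 1 := by
    simpa using (hasDerivAt_id (1 : ℝ)).smul_const x
  rw [← one_smul ℝ x] at hg
  simpa [Function.comp_def] using hg.hasFDerivAt.comp_hasDerivAt 1 hline

theorem DifferentiableAt.fderiv_apply_self_eq_of_eventually_log {g : E → ℝ} {x : E} {c : ℝ}
    (hg : DifferentiableAt ℝ g x) (hlog : ∀ᶠ t in 𝓝 1, g (t • x) = g x - c * Real.log t) :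
    fderiv ℝ g x x = -c := by
  have hrhs : HasDerivAt (fun t => g x - c * Real.log t) (-c) 1 := by
    simpa using ((Real.hasDerivAt_log one_ne_zero).const_mul c).const_sub (g x)
  exact hg.hasDerivAt_comp_smul_one.unique (hrhs.congr_of_eventuallyEq hlog)

end Calculus

theorem eq_sub_mul_log_of_exp_eq_exp_div_pow {a b t : ℝ} (ht : 0 < t) {n : ℕ}
    (h : Real.exp a = Real.exp b / t ^ n) : a = b - n * Real.log t := by
  have := congrArg Real.log h
  rwa [Real.log_exp, Real.log_div (Real.exp_ne_zero _) (pow_pos ht n).ne', Real.log_exp,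
    Real.log_pow] at this

theorem stmt_6_general (m : ℕ) (C : Set (Fin (m + 1) → ℝ)) (hCne : C.Nonempty) (hCopen : IsOpen C)
    (G h : (Fin (m + 1) → ℝ) → ℝ) (γ ξ : Fin (m + 1) → ℝ)
    (hG : ContDiffOn ℝ 2 G C)
    (gradG : (Fin (m + 1) → ℝ) → (Fin (m + 1) → ℝ))
    (hgrad : ∀ y ∈ C, ∀ i, gradG y i = fderiv ℝ G y (Pi.single i 1))
    (H : (Fin (m + 1) → ℝ) → Matrix (Fin (m + 1)) (Fin (m + 1)) ℝ)
    (hHess : ∀ y ∈ C, ∀ i j,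
      H y i j = fderiv ℝ (fun z => fderiv ℝ G z (Pi.single j 1)) y (Pi.single i 1))
    (hhom : ∀ t : ℝ, 0 < t → ∀ y ∈ C, h (t • y) = h y)
    (hi : ∀ y ∈ C, (H y).det = Real.exp (2 * (∑ i, γ i * gradG y i) + h y))
    (hii : ∀ t : ℝ, 0 < t → ∀ y ∈ C, (H (t • y)).det = (H y).det / t ^ (m + 1))
    (hiii : ∀ y ∈ C, ∀ i, 2 * ∑ j, H y i j * y j = ξ i) :
    ∑ i, γ i * ξ i = -(m + 1) := by
  obtain ⟨y, hy⟩ := hCne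
  have hGy : ContDiffAt ℝ 2 G y := hG.contDiffAt (hCopen.mem_nhds hy)
  have hDG : DifferentiableAt ℝ (fderiv ℝ G) y :=
    (hGy.fderiv_right (m := 1) le_rfl).differentiableAt one_ne_zero
  have hdet : ∀ z ∈ C, (H z).det = Real.exp (2 * fderiv ℝ G z γ + h z) := fun z hz => by
    simp_rw [hi z hz, hgrad z hz, ← smul_eq_mul, sum_smul_apply_single]
  have hray : ∀ᶠ t in 𝓝 (1 : ℝ), t • y ∈ C :=
    (continuous_id.smul continuous_const).continuousAt.preimage_mem_nhds
      (by simpa using hCopen.mem_nhds hy)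
  have hlog : ∀ᶠ t in 𝓝 (1 : ℝ),
      fderiv ℝ G (t • y) γ = fderiv ℝ G y γ - ((m + 1) / 2 : ℝ) * Real.log t := by
    filter_upwards [eventually_gt_nhds one_pos, hray] with t ht hty
    have hscale := hii t ht y hy
    rw [hdet _ hty, hdet y hy, hhom t ht y hy] at hscale
    have := eq_sub_mul_log_of_exp_eq_exp_div_pow ht hscale
    push_cast at this
    linarith
  have hEuler : fderiv ℝ (fderiv ℝ G) y y γ = -((m + 1) / 2 : ℝ) := by
    rw [← fderiv_clm_apply_const hDG γ]
    exact (hDG.clm_apply (differentiableAt_const γ)).fderiv_apply_self_eq_of_eventually_log hlog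
  have hHessian : fderiv ℝ (fderiv ℝ G) y γ y = (∑ i, γ i * ξ i) / 2 := by
    rw [ContinuousLinearMap.apply_apply_eq_sum_single, Finset.sum_div]
    refine Finset.sum_congr rfl fun i _ => ?_
    simp_rw [← fderiv_clm_apply_const hDG, ← hHess y hy, ← hiii y hy i]
    ring
  have hsymm := (hGy.isSymmSndFDerivAt (by simp)).eq y γ
  linarith

/-- If the symplectic potential `G` of a toric Kähler cone satisfies
`det(Hess G) = exp(2⟨γ, ∇G⟩ + h)` with `h` homogeneous of degree `0`,
`det(Hess G)` homogeneous of degree `−(m+1)`, and `2 (Hess G) y = ξ`,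
then `⟨γ, ξ⟩ = −(m+1)`. -/
theorem stmt_6 (m : ℕ) (C : Set (Fin (m + 1) → ℝ)) (hCne : C.Nonempty) (hCopen : IsOpen C)
    (hCcone : ∀ t : ℝ, 0 < t → ∀ y ∈ C, t • y ∈ C)
    (G h : (Fin (m + 1) → ℝ) → ℝ) (γ ξ : Fin (m + 1) → ℝ)
    (hG : ContDiffOn ℝ 2 G C)
    (gradG : (Fin (m + 1) → ℝ) → (Fin (m + 1) → ℝ))
    (hgrad : ∀ y ∈ C, ∀ i, gradG y i = fderiv ℝ G y (Pi.single i 1))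
    (H : (Fin (m + 1) → ℝ) → Matrix (Fin (m + 1)) (Fin (m + 1)) ℝ)
    (hHess : ∀ y ∈ C, ∀ i j,
      H y i j = fderiv ℝ (fun z => fderiv ℝ G z (Pi.single j 1)) y (Pi.single i 1))
    (hhom : ∀ t : ℝ, 0 < t → ∀ y ∈ C, h (t • y) = h y)
    (hi : ∀ y ∈ C, (H y).det = Real.exp (2 * (∑ i, γ i * gradG y i) + h y))
    (hii : ∀ t : ℝ, 0 < t → ∀ y ∈ C, (H (t • y)).det = (H y).det / t ^ (m + 1))
    (hiii : ∀ y ∈ C, ∀ i, 2 * ∑ j, H y i j * y j = ξ i) :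
    ∑ i, γ i * ξ i = -(m + 1) :=
  stmt_6_general m C hCne hCopen G h γ ξ hG gradG hgrad H hHess hhom hi hii hiii
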